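/- arXiv:1105.3513 — 5 statements merged into one kernel-verified Lean document; each statement's English description precedes it below -/
import Mathlib

section
/- For a polynomial f with coefficients in a ℚ-algebra, the Newton series expansion holds: f(x) = Σ_k (Δ^k f)(0) · C(x, k), where Δ is the forward difference operator (Δf)(x) = f(x+1) − f(x), and the sum is over 0 ≤ k ≤ deg f. -/
/-!
Both sides are polynomials in `x`, and at every `x = n ∈ ℕ` they agree by the Gregory–Newton
formula `f(n) = ∑ C(n,k) (Δ^k f)(0)`. A polynomial `p` over an additively torsion-free ring that
vanishes on `ℕ` is zero: all its iterated differences at `0` vanish, while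
`Δ^{deg p} p = (deg p)! · lead p`.
-/

open Finset fwdDiff

namespace Polynomial

section TorsionFree

variable {R : Type*} [CommRing R] [IsAddTorsionFree R]

theorem eq_zero_of_fwdDiff_iter_eval_zero {p : R[X]} (h : ∀ n, (Δ_[1])^[n] p.eval 0 = 0) :
    p = 0 := by
  have hlead := congrFun p.fwdDiff_iter_degree_eq_factorial 0
  rw [h, Pi.smul_apply, Pi.natCast_apply, smul_eq_mul, mul_comm, ← nsmul_eq_mul, eq_comm,
    smul_eq_zero] at hlead
  exact leadingCoeff_eq_zero.mp (hlead.resolve_left p.natDegree.factorial_ne_zero)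

theorem eq_of_eval_natCast_eq {p q : R[X]} (h : ∀ n : ℕ, p.eval (n : R) = q.eval (n : R)) :
    p = q :=
  sub_eq_zero.mp <| eq_zero_of_fwdDiff_iter_eval_zero fun n ↦ by
    simp [fwdDiff_iter_eq_sum_shift, h]

end TorsionFree

variable (A : Type*) [CommRing A] [Algebra ℚ A]

noncomputable def choose (k : ℕ) : A[X] :=
  C (algebraMap ℚ A (1 / k.factorial)) * descPochhammer A k

theorem eval_choose (k : ℕ) (x : A) :
    (choose A k).eval x = algebraMap ℚ A (1 / k.factorial) * ∏ i ∈ range k, (x - (i : A)) := by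
  rw [choose, eval_mul, eval_C, descPochhammer_eval_eq_prod_range]

theorem eval_natCast_choose (n k : ℕ) : (choose A k).eval (n : A) = n.choose k := by
  rw [choose, eval_mul, eval_C, descPochhammer_eval_eq_descFactorial,
    Nat.descFactorial_eq_factorial_mul_choose, ← map_natCast (algebraMap ℚ A),
    ← map_natCast (algebraMap ℚ A) (n.choose k), ← map_mul]
  congr 1
  push_cast
  field_simp

variable {A}

theorem eq_sum_fwdDiff_iter_mul_choose (f : A[X]) :
    f = ∑ k ∈ range (f.natDegree + 1), C ((Δ_[1])^[k] f.eval 0) * choose A k := by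
  have := IsAddTorsionFree.of_module_rat A
  refine eq_of_eval_natCast_eq fun n ↦ ?_
  simp only [eval_finsetSum, eval_mul, eval_C, eval_natCast_choose]
  calc f.eval (n : A) = ∑ k ∈ range (n + 1), n.choose k • (Δ_[1])^[k] f.eval 0 := by
        simpa using shift_eq_sum_fwdDiff_iter 1 f.eval n 0
    _ = ∑ k ∈ range (n + f.natDegree + 1), n.choose k • (Δ_[1])^[k] f.eval 0 := by
        refine sum_subset (range_subset_range.mpr (by omega)) fun k _ hk ↦ ?_
        rw [Nat.choose_eq_zero_of_lt (by simpa using hk), zero_smul]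
    _ = ∑ k ∈ range (f.natDegree + 1), n.choose k • (Δ_[1])^[k] f.eval 0 := by
        refine (sum_subset (range_subset_range.mpr (by omega)) fun k _ hk ↦ ?_).symm
        rw [fwdDiff_iter_eq_zero_of_degree_lt (by simpa using hk), Pi.zero_apply, smul_zero]
    _ = _ := sum_congr rfl fun k _ ↦ by rw [nsmul_eq_mul, mul_comm]

end Polynomial

open fwdDiff in
/-- Newton series expansion of a polynomial over a `ℚ`-algebra:
`f(x) = ∑_{k ≤ deg f} (Δ^k f)(0) · C(x,k)` where `C(x,k) = x(x-1)⋯(x-k+1)/k!`. -/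
theorem newton_series (A : Type*) [CommRing A] [Algebra ℚ A] (f : Polynomial A) (x : A) :
    f.eval x = ∑ k ∈ Finset.range (f.natDegree + 1),
      ((fwdDiff (1 : A))^[k] (fun y : A => f.eval y)) 0 *
        (algebraMap ℚ A (1 / k.factorial) * ∏ i ∈ Finset.range k, (x - (i : A))) := by
  simpa [Polynomial.eval_finsetSum, Polynomial.eval_choose] using
    congrArg (Polynomial.eval x) f.eq_sum_fwdDiff_iter_mul_choose
end

section
/- (Mahler's Theorem) Every continuous function f : ℤ_p → ℚ_p is the uniform limit of its Newton series: f(s) = Σ_k a_k C(s, k) where a_k = (Δ^k f)(0) and a_k → 0 p-adically. -/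
/-! The analytic content is Mathlib's `PadicInt.hasSum_mahler`: the coefficients `Δ^k f(0)` tend to
zero by Bojanic's estimate, so the Mahler series converges in the sup norm, and its sum agrees with
`f` on the dense subset `ℕ ⊆ ℤ_[p]`. What remains is to identify `Ring.choose s k` with the
product formula `s (s - 1) ⋯ (s - k + 1) / k!` computed in `ℚ_[p]`. -/

lemma Ring.choose_eq_prod_range_div {K : Type*} [Field K] [CharZero K] (x : K) (k : ℕ) :
    Ring.choose x k = (∏ i ∈ Finset.range k, (x - i)) / k.factorial := by
  rw [Ring.choose_eq_smul, ← Polynomial.aeval_eq_smeval, Polynomial.aeval_def,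
    ← Polynomial.eval_map, descPochhammer_map, descPochhammer_eval_eq_prod_range, smul_eq_mul,
    inv_mul_eq_div]

lemma PadicInt.coe_choose {p : ℕ} [Fact p.Prime] (x : ℤ_[p]) (k : ℕ) :
    ((Ring.choose x k : ℤ_[p]) : ℚ_[p]) =
      (∏ i ∈ Finset.range k, ((x : ℚ_[p]) - i)) / k.factorial := by
  rw [← Ring.choose_eq_prod_range_div]
  exact Ring.map_choose PadicInt.Coe.ringHom x k

instance PadicInt.instNormSMulClassPadic {p : ℕ} [Fact p.Prime] : NormSMulClass ℤ_[p] ℚ_[p] :=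
  ⟨fun r x => by rw [Algebra.smul_def, norm_mul]; rfl⟩

lemma PadicInt.tendstoUniformly_mahler {p : ℕ} [Fact p.Prime] {E : Type*} [NormedAddCommGroup E]
    [Module ℤ_[p] E] [IsBoundedSMul ℤ_[p] E] [IsUltrametricDist E] [CompleteSpace E]
    (f : C(ℤ_[p], E)) :
    TendstoUniformly (fun n s => ∑ k ∈ Finset.range n, mahler k s • (fwdDiff 1)^[k] f 0) f
      Filter.atTop := by
  have := ContinuousMap.tendsto_iff_tendstoUniformly.mp (PadicInt.hasSum_mahler f).tendsto_sum_nat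
  simpa only [ContinuousMap.coe_sum, Finset.sum_apply, PadicInt.mahlerTerm_apply] using this

/-- **Mahler's theorem**: every continuous `f : ℤ_p → ℚ_p` is the uniform limit of its
Newton series `∑_k a_k C(s,k)` with `a_k = (Δ^k f)(0)`, and `a_k → 0` p-adically. -/
theorem mahler_theorem (p : ℕ) [Fact p.Prime] (f : ℤ_[p] → ℚ_[p]) (hf : Continuous f) :
    Filter.Tendsto (fun k => (fwdDiff (1 : ℤ_[p]))^[k] f 0) Filter.atTop (nhds 0) ∧
      TendstoUniformly
        (fun n (s : ℤ_[p]) => ∑ k ∈ Finset.range n,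
          (fwdDiff (1 : ℤ_[p]))^[k] f 0 *
            ((∏ i ∈ Finset.range k, ((s : ℚ_[p]) - (i : ℚ_[p]))) / (k.factorial : ℚ_[p])))
        f Filter.atTop := by
  refine ⟨PadicInt.fwdDiff_tendsto_zero ⟨f, hf⟩, ?_⟩
  convert PadicInt.tendstoUniformly_mahler ⟨f, hf⟩ using 4 with n s k
  · rw [mahler_apply, Algebra.smul_def, PadicInt.algebraMap_apply, PadicInt.coe_choose, mul_comm]
    rfl
  · rfl
end

section
/- With e_k as above and D_k := e_k(t^k), D_k equals the product of all monic polynomials in 𝔽_q[t] of degree k. -/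
open Polynomial in
/-- The Carlitz polynomial `e_k(X) = ∏ (X - α)`, product over all `α ∈ 𝔽_q[t]` of degree `< k`. -/
noncomputable def carlitzE (F : Type*) [Field F] [Fintype F] (k : ℕ) :
    Polynomial (Polynomial F) :=
  ∏ c : Fin k → F, (X - C (∑ i : Fin k, Polynomial.C (c i) * X ^ (i : ℕ)))

open Polynomial in
/-- `D_k := e_k(t^k)` equals the product of all monic polynomials of degree `k` in `𝔽_q[t]`
(parametrized as `t^k` plus an arbitrary polynomial of degree `< k`). -/
theorem carlitzD_eq_prod_monics (F : Type*) [Field F] [Fintype F] (k : ℕ) :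
    (carlitzE F k).eval ((X : Polynomial F) ^ k) =
      ∏ c : Fin k → F, ((X : Polynomial F) ^ k + ∑ i : Fin k, Polynomial.C (c i) * X ^ (i : ℕ)) := by
  rw [carlitzE, eval_prod]
  -- `α ↦ -α` permutes the polynomials of degree `< k` and turns `t^k - α` into `t^k + α`.
  refine Fintype.prod_bijective Neg.neg neg_involutive.bijective _ _ fun c => ?_
  simp only [eval_sub, eval_X, eval_C, Pi.neg_apply, map_neg, neg_mul, Finset.sum_neg_distrib]
  exact sub_eq_add_neg _ _
end

section
/- (Carlitz integrality) For every g ∈ 𝔽_q[t] and every k ≥ 0, the element e_k(g)/D_k lies in 𝔽_q[t]. -/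
open Finset Polynomial

section Multiplicity

theorem card_filter_pow_dvd_eq_min_emultiplicity {α : Type*} [Monoid α]
    [DecidableRel (α := α) (· ∣ ·)] (p x : α) (N : ℕ) :
    (#{j ∈ Icc 1 N | p ^ j ∣ x} : ℕ∞) = min (N : ℕ∞) (emultiplicity p x) := by
  simp only [pow_dvd_iff_le_emultiplicity]
  induction emultiplicity p x using ENat.recTopCoe with
  | top => simp
  | coe m =>
    rw [show {j ∈ Icc 1 N | ((j : ℕ) : ℕ∞) ≤ m} = Icc 1 (min N m) by ext; simp; omega]
    simp only [Nat.card_Icc, add_tsub_cancel_right]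
    norm_cast

variable {α ι : Type*} [CommMonoidWithZero α] [Nontrivial α] [UniqueFactorizationMonoid α]
  [DecidableRel (α := α) (· ∣ ·)] [Fintype ι]

theorem prod_dvd_prod_of_card_pow_dvd_le {a b : ι → α} (ha : ∀ i, a i ≠ 0)
    (hab : ∀ p, Prime p → ∀ j, #{i | p ^ j ∣ a i} ≤ #{i | p ^ j ∣ b i}) :
    ∏ i, a i ∣ ∏ i, b i := by
  rw [UniqueFactorizationMonoid.dvd_iff_emultiplicity_le (prod_ne_zero_iff.2 fun i _ ↦ ha i)]
  intro p hp
  rw [Finset.emultiplicity_prod hp, Finset.emultiplicity_prod hp]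
  set N := ∑ i, multiplicity p (a i)
  have hN i : emultiplicity p (a i) ≤ N := by
    rw [(FiniteMultiplicity.of_prime_left hp (ha i)).emultiplicity_eq_multiplicity, Nat.cast_le]
    exact single_le_sum (f := fun i ↦ multiplicity p (a i)) (fun _ _ ↦ Nat.zero_le _) (mem_univ i)
  calc ∑ i, emultiplicity p (a i)
      = ((∑ i, #{j ∈ Icc 1 N | p ^ j ∣ a i} : ℕ) : ℕ∞) := by
        push_cast
        simp only [card_filter_pow_dvd_eq_min_emultiplicity, min_eq_right (hN _)]
    _ = ((∑ j ∈ Icc 1 N, #{i | p ^ j ∣ a i} : ℕ) : ℕ∞) :=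
        congrArg _ <| sum_card_bipartiteAbove_eq_sum_card_bipartiteBelow fun i j ↦ p ^ j ∣ a i
    _ ≤ ((∑ j ∈ Icc 1 N, #{i | p ^ j ∣ b i} : ℕ) : ℕ∞) := by
        exact_mod_cast sum_le_sum fun j _ ↦ hab p hp j
    _ = ((∑ i, #{j ∈ Icc 1 N | p ^ j ∣ b i} : ℕ) : ℕ∞) :=
        congrArg _ (sum_card_bipartiteAbove_eq_sum_card_bipartiteBelow fun i j ↦ p ^ j ∣ b i).symm
    _ ≤ ∑ i, emultiplicity p (b i) := by
        push_cast
        gcongr with i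
        rw [card_filter_pow_dvd_eq_min_emultiplicity]
        exact min_le_right _ _

end Multiplicity

namespace Polynomial

theorem ofFn_toFn_of_degree_lt {R : Type*} [Semiring R] [DecidableEq R] {n : ℕ} {p : R[X]}
    (hp : p.degree < n) : ofFn n (toFn n p) = p := by
  rcases eq_or_ne p 0 with rfl | h
  · simp
  · exact ofFn_comp_toFn_eq_id_of_natDegree_lt ((natDegree_lt_iff_degree_lt h).2 hp)

theorem natDegree_X_pow_sub_of_degree_lt {R : Type*} [Ring R] [Nontrivial R] {n : ℕ} {p : R[X]}
    (hp : p.degree < n) : (X ^ n - p).natDegree = n := by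
  refine natDegree_eq_of_degree_eq_some ?_
  rw [degree_sub_eq_left_of_degree_lt (by rwa [degree_X_pow]), degree_X_pow]

variable {F : Type*} [Field F] [Fintype F] [DecidableEq F] [DecidableRel (α := F[X]) (· ∣ ·)]

theorem card_filter_dvd_sub_ofFn_eq {k : ℕ} {m : F[X]} (hm : m ≠ 0) (hmk : m.natDegree ≤ k)
    (x y : F[X]) :
    #{c : Fin k → F | m ∣ x - ofFn k c} = #{c : Fin k → F | m ∣ y - ofFn k c} := by
  set δ := y % m - x % m
  have hδ : ofFn k (toFn k δ) = δ := by
    have hmk' : m.degree ≤ k := degree_le_natDegree.trans (by exact_mod_cast hmk)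
    exact ofFn_toFn_of_degree_lt <| (degree_sub_le _ _).trans_lt <|
      max_lt ((degree_mod_lt _ hm).trans_le hmk') ((degree_mod_lt _ hm).trans_le hmk')
  have hmod : m ∣ (y - y % m) - (x - x % m) := by
    simp only [EuclideanDomain.mod_eq_sub_mul_div, sub_sub_cancel, ← mul_sub]
    exact dvd_mul_right _ _
  -- translating by the difference of the remainders maps one residue class onto the other
  refine card_equiv (Equiv.addRight (toFn k δ)) fun c ↦ ?_
  have : y - ofFn k (c + toFn k δ) = (x - ofFn k c) + ((y - y % m) - (x - x % m)) := by
    rw [map_add, hδ]; ring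
  simp only [mem_filter, mem_univ, true_and, Equiv.coe_addRight, this, dvd_add_left hmod]

theorem card_filter_dvd_X_pow_sub_ofFn_le (k : ℕ) (m g : F[X]) :
    #{c : Fin k → F | m ∣ X ^ k - ofFn k c} ≤ #{c : Fin k → F | m ∣ g - ofFn k c} := by
  rcases eq_empty_or_nonempty {c : Fin k → F | m ∣ X ^ k - ofFn k c} with h | ⟨c₀, hc₀⟩
  · simp [h]
  have hdvd := (mem_filter.1 hc₀).2
  have hne := (monic_X_pow_sub (ofFn_degree_lt c₀)).ne_zero
  refine (card_filter_dvd_sub_ofFn_eq (ne_zero_of_dvd_ne_zero hne hdvd) ?_ _ _).le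
  simpa [natDegree_X_pow_sub_of_degree_lt (ofFn_degree_lt c₀)] using natDegree_le_of_dvd hdvd hne

end Polynomial

theorem eval_carlitzE (F : Type*) [Field F] [Fintype F] [DecidableEq F] (k : ℕ) (x : F[X]) :
    (carlitzE F k).eval x = ∏ c : Fin k → F, (x - ofFn k c) := by
  simp only [carlitzE, eval_prod, eval_sub, eval_X, eval_C, ofFn_eq_sum_monomial,
    C_mul_X_pow_eq_monomial]

open Polynomial in
/-- **Carlitz integrality**: `D_k = e_k(t^k)` divides `e_k(g)` for every `g ∈ 𝔽_q[t]`,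
i.e. `e_k(g)/D_k ∈ 𝔽_q[t]`. -/
theorem carlitz_integrality (F : Type*) [Field F] [Fintype F] (k : ℕ) (g : Polynomial F) :
    (carlitzE F k).eval ((X : Polynomial F) ^ k) ∣ (carlitzE F k).eval g := by
  classical
  rw [eval_carlitzE, eval_carlitzE]
  exact prod_dvd_prod_of_card_pow_dvd_le (fun c ↦ (monic_X_pow_sub (ofFn_degree_lt c)).ne_zero)
    fun p _ j ↦ card_filter_dvd_X_pow_sub_ofFn_le k (p ^ j) g
end

section
/- Let σ ∈ S_(p) be a digit-permutation of ℤ_p with q = p. Then for all nonnegative integers i, j: C(i+j, i) ≡ C(σi + σj, σi) (mod p). -/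
/-!
By Lucas' theorem, `C(m + n, m) ≡ ∏ₜ C(mₜ + nₜ, mₜ) (mod p)`, where `mₜ, nₜ` are the base-`p`
digits: without carries `(m + n)ₜ = mₜ + nₜ`, and at the lowest carry both sides vanish.
The digits of `ρ_* m` are those of `m` rearranged by `ρ`, so the right-hand side is unchanged
when `m, n` are replaced by `ρ_* m, ρ_* n`.
-/

/-- `ρ_*` acting on nonnegative integers: permute the base-`p` digit positions. -/
def natRhoStar (p : ℕ) (ρ : ℕ → ℕ) (n : ℕ) : ℕ :=
  ∑ i ∈ Finset.range (n + 1), n / p ^ i % p * p ^ (ρ i)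

open Finset Function

namespace Nat

variable {p : ℕ}

theorem div_pow_mod_eq_zero_of_le (hp : 1 < p) {n t : ℕ} (h : n ≤ t) : n / p ^ t % p = 0 := by
  rw [Nat.div_eq_of_lt ((Nat.lt_pow_self hp).trans_le (Nat.pow_le_pow_right (by omega) h)),
    Nat.zero_mod]

theorem sum_range_mul_pow_div_pow_mod (hp : 1 < p) {g : ℕ → ℕ} (hg : ∀ k, g k < p) (M t : ℕ) :
    (∑ k ∈ range M, g k * p ^ k) / p ^ t % p = if t < M then g t else 0 := by
  induction M generalizing g t with
  | zero => simp
  | succ M ih =>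
    have hshift : ∑ k ∈ range (M + 1), g k * p ^ k =
        g 0 + p * ∑ k ∈ range M, g (k + 1) * p ^ k := by
      rw [sum_range_succ', mul_sum, add_comm]
      simp only [pow_succ, pow_zero, mul_one]
      congr 1
      exact sum_congr rfl fun k _ => by ring
    rw [hshift]
    cases t with
    | zero => simp [Nat.mod_eq_of_lt (hg 0)]
    | succ t =>
      rw [pow_succ', ← Nat.div_div_eq_div_mul, Nat.add_mul_div_left _ _ (by omega),
        Nat.div_eq_of_lt (hg 0), zero_add, ih fun k => hg (k + 1)]
      simp

theorem finsum_mul_pow_div_pow_mod (hp : 1 < p) {g : ℕ → ℕ} (hg : ∀ k, g k < p)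
    (hfin : (support g).Finite) (t : ℕ) : (∑ᶠ k, g k * p ^ k) / p ^ t % p = g t := by
  obtain ⟨M, hM⟩ := hfin.bddAbove
  have hsupp : support (fun k => g k * p ^ k) ⊆ range (M + 1) := fun k hk =>
    mem_range.2 (Nat.lt_succ_of_le (hM (support_mul_subset_left _ _ hk)))
  rw [finsum_eq_sum_of_support_subset _ hsupp, sum_range_mul_pow_div_pow_mod hp hg]
  split_ifs with ht
  · rfl
  · exact (notMem_support.1 fun h => ht (Nat.lt_succ_of_le (hM h))).symm

theorem choose_add_eq_prod_range_choose_digits (hp : p.Prime) {a m n : ℕ} (h : m + n < p ^ a) :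
    ((m + n).choose m : ZMod p) =
      ∏ t ∈ range a, ((m / p ^ t % p + n / p ^ t % p).choose (m / p ^ t % p) : ZMod p) := by
  have := Fact.mk hp
  induction a generalizing m n with
  | zero =>
    obtain ⟨rfl, rfl⟩ : m = 0 ∧ n = 0 := by simp at h; omega
    simp
  | succ a ih =>
    have hlucas : ((m + n).choose m : ZMod p) =
        ((m + n) % p).choose (m % p) * ((m + n) / p).choose (m / p) := by
      exact_mod_cast (ZMod.natCast_eq_natCast_iff _ _ _).2
        Choose.choose_modEq_choose_mod_mul_choose_div_nat
    rw [hlucas, prod_range_succ', mul_comm]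
    simp only [pow_succ', ← Nat.div_div_eq_div_mul, pow_zero, Nat.div_one]
    by_cases hc : m % p + n % p < p
    · have hq : m / p + n / p < p ^ a := by
        rw [← add_div_eq_of_add_mod_lt hc, Nat.div_lt_iff_lt_mul hp.pos]
        rwa [pow_succ] at h
      rw [add_mod_of_add_mod_lt hc, add_div_eq_of_add_mod_lt hc, ih hq]
    · have hcarry : p ∣ (m % p + n % p).choose (m % p) :=
        hp.dvd_choose_add (mod_lt _ hp.pos) (mod_lt _ hp.pos) (not_lt.1 hc)
      have hzero : ((m + n) % p).choose (m % p) = 0 := by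
        refine choose_eq_zero_of_lt ?_
        have := add_mod_add_of_le_add_mod (not_lt.1 hc)
        have := mod_lt n hp.pos
        omega
      simp [hzero, (ZMod.natCast_eq_zero_iff _ _).2 hcarry]

theorem choose_add_eq_finprod_choose_digits (hp : p.Prime) (m n : ℕ) :
    ((m + n).choose m : ZMod p) =
      ∏ᶠ t, ((m / p ^ t % p + n / p ^ t % p).choose (m / p ^ t % p) : ZMod p) := by
  have hsupp : mulSupport (fun t =>
      ((m / p ^ t % p + n / p ^ t % p).choose (m / p ^ t % p) : ZMod p)) ⊆ range (m + n) :=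
    fun t ht => by
      by_contra h
      simp only [coe_range, Set.mem_Iio, not_lt] at h
      exact ht (by simp [div_pow_mod_eq_zero_of_le hp.one_lt (show m ≤ t by omega),
        div_pow_mod_eq_zero_of_le hp.one_lt (show n ≤ t by omega)])
  rw [finprod_eq_prod_of_mulSupport_subset _ hsupp]
  exact choose_add_eq_prod_range_choose_digits hp (Nat.lt_pow_self hp.one_lt)

end Nat

open Nat

theorem natRhoStar_eq_finsum {p : ℕ} (hp : 1 < p) (ρ : Equiv.Perm ℕ) (n : ℕ) :
    natRhoStar p ρ n = ∑ᶠ k, n / p ^ ρ.symm k % p * p ^ k := by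
  have hsupp : support (fun i => n / p ^ i % p * p ^ ρ i) ⊆ range (n + 1) := fun i hi => by
    by_contra h
    exact hi (by simp only [div_pow_mod_eq_zero_of_le hp (by simp at h; omega : n ≤ i), zero_mul])
  rw [natRhoStar, ← finsum_eq_sum_of_support_subset _ hsupp,
    ← finsum_comp_equiv ρ.symm]
  simp

theorem natRhoStar_div_pow_mod {p : ℕ} (hp : 1 < p) (ρ : Equiv.Perm ℕ) (n k : ℕ) :
    natRhoStar p ρ n / p ^ k % p = n / p ^ ρ.symm k % p := by
  refine (natRhoStar_eq_finsum hp ρ n).symm ▸ finsum_mul_pow_div_pow_mod hp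
    (fun k => Nat.mod_lt _ (by omega)) ?_ k
  refine ((Set.finite_Iio n).preimage ρ.symm.injective.injOn).subset fun k hk => ?_
  by_contra h
  exact hk (div_pow_mod_eq_zero_of_le hp (by simpa using h))

/-- For a digit-permutation `σ = ρ_*` and nonnegative integers `i, j`:
`C(i+j, i) ≡ C(σi + σj, σi) (mod p)`. -/
theorem rhoStar_choose_congr (p : ℕ) (hp : p.Prime) (ρ : Equiv.Perm ℕ) (i j : ℕ) :
    (((i + j).choose i : ZMod p)) =
      (((natRhoStar p ρ i + natRhoStar p ρ j).choose (natRhoStar p ρ i) : ZMod p)) := by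
  rw [choose_add_eq_finprod_choose_digits hp, choose_add_eq_finprod_choose_digits hp]
  simp only [natRhoStar_div_pow_mod hp.one_lt]
  exact (finprod_comp_equiv ρ.symm).symm
end
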